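/- arXiv:1201.4670 — 2 statements merged into one kernel-verified Lean document; each statement's English description precedes it below -/
import Mathlib

section
/- Assume the family (r_j)_{j∈ℤ³} is independent, each with law ν, and that there exist κ > 0, a point v with the ball B_κ(v) contained in W, and two distinct indices i ≠ j in ℤ³, such that ν(A) ≥ κ·λ(A) for every Borel set A ⊆ (B_κ(v) − i) ∪ (B_κ(v) − j). Then P(i + r_i ∈ W) > 0, and there exists a constant c > 0 (depending on ν, κ, i and j) such that for every 0 < ε < κ/2 one has P(i + r_i ∈ W and δ_i ≤ ε) ≥ c·ε³·P(i + r_i ∈ W). -/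
/-! With positive probability `r_i` lands in `B_{κ/2}(v) − i`, where `ν ≥ κ·λ`, and this already
puts `i + r_i` in `W`. For such a value of `r_i` the ball `B_ε(i + r_i − j)` lies in `B_κ(v) − j`,
so, independently, `r_j` falls into it with probability at least `κ·λ(B_ε) = (4πκ/3) ε³`, and then
`δ_i ≤ |i + r_i − j − r_j| < ε`. Integrating over `r_i` against the product law of `(r_i, r_j)`
gives the bound, using `P(i + r_i ∈ W) ≤ 1`. -/

open MeasureTheory ProbabilityTheory ENNReal

noncomputable section

/-- `ℝ³` with the Euclidean norm. -/
abbrev E3 := EuclideanSpace ℝ (Fin 3)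

/-- The lattice point `j ∈ ℤ³` viewed in `ℝ³`. -/
def latt (j : Fin 3 → ℤ) : E3 := (EuclideanSpace.equiv (Fin 3) ℝ).symm (fun i => (j i : ℝ))

/-- The semi-open unit cube `W = [-1/2, 1/2)³`. -/
def Wcube : Set E3 := {x | ∀ i, -(1:ℝ)/2 ≤ x i ∧ x i < 1/2}

/-- The distance (in `[0,∞]`) from the perturbed lattice point `i + r_i(ω)` to its nearest
neighbor: `δ_i(ω) = inf_{k ≠ i} |i + r_i(ω) − k − r_k(ω)|`. -/
def nnd {Ω : Type*} (r : (Fin 3 → ℤ) → Ω → E3) (i : Fin 3 → ℤ) (ω : Ω) : ℝ≥0∞ :=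
  ⨅ k : {k : Fin 3 → ℤ // k ≠ i},
    edist (latt i + r i ω) (latt (k : Fin 3 → ℤ) + r (k : Fin 3 → ℤ) ω)

open Real

namespace MeasureTheory.Measure

variable {α β : Type*} [MeasurableSpace α] [MeasurableSpace β]

lemma mul_le_prod_apply_of_le_slice (μ : Measure α) (ν : Measure β) [SFinite ν] {S : Set α}
    {T : Set (α × β)} (hT : MeasurableSet T) {C : ℝ≥0∞}
    (hslice : ∀ x ∈ S, C ≤ ν (Prod.mk x ⁻¹' T)) : C * μ S ≤ μ.prod ν T :=
  calc C * μ S = ∫⁻ _ in S, C ∂μ := by rw [setLIntegral_const, mul_comm]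
    _ ≤ ∫⁻ x in S, ν (Prod.mk x ⁻¹' T) ∂μ :=
      setLIntegral_mono (measurable_measure_prodMk_left hT) hslice
    _ ≤ ∫⁻ x, ν (Prod.mk x ⁻¹' T) ∂μ := setLIntegral_le_lintegral _ _
    _ = μ.prod ν T := (prod_apply hT).symm

end MeasureTheory.Measure

namespace ProbabilityTheory

variable {Ω α β : Type*} {mΩ : MeasurableSpace Ω} [MeasurableSpace α] [MeasurableSpace β]

lemma IndepFun.measure_preimage_prodMk {P : Measure Ω} [IsFiniteMeasure P] {X : Ω → α}
    {Y : Ω → β} {μ : Measure α} {ν : Measure β} (hXY : IndepFun X Y P) (hX : Measurable X)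
    (hY : Measurable Y) (hμ : P.map X = μ) (hν : P.map Y = ν) {T : Set (α × β)}
    (hT : MeasurableSet T) : P ((fun ω => (X ω, Y ω)) ⁻¹' T) = μ.prod ν T := by
  rw [← Measure.map_apply (hX.prodMk hY) hT,
    (indepFun_iff_map_prod_eq_prod_map_map hX.aemeasurable hY.aemeasurable).mp hXY, hμ, hν]

end ProbabilityTheory

lemma nnd_le_of_mem_ball {Ω : Type*} {r : (Fin 3 → ℤ) → Ω → E3} {i j : Fin 3 → ℤ}
    (hij : i ≠ j) {ω : Ω} {ε : ℝ} (h : r j ω + latt j ∈ Metric.ball (r i ω + latt i) ε) :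
    nnd r i ω ≤ ENNReal.ofReal ε := by
  refine (iInf_le (fun k : {k : Fin 3 → ℤ // k ≠ i} => edist (latt i + r i ω) (latt k + r k ω))
    ⟨j, hij.symm⟩).trans ?_
  rw [edist_dist, add_comm (latt i), add_comm (latt j), dist_comm]
  exact ENNReal.ofReal_le_ofReal (le_of_lt h)

lemma ofReal_le_measure_preimage_add_ball {ν : Measure E3} {κ ρ : ℝ} {v x a : E3}
    (hlower : ∀ A : Set E3, MeasurableSet A → A ⊆ (· + a) ⁻¹' Metric.ball v κ →
      ENNReal.ofReal κ * volume A ≤ ν A)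
    (hρ : 0 ≤ ρ) (hx : ρ + dist x v ≤ κ) :
    ENNReal.ofReal (κ * (π * 4 / 3) * ρ ^ 3) ≤ ν ((· + a) ⁻¹' Metric.ball x ρ) := by
  have hκ : 0 ≤ κ := by linarith [dist_nonneg (x := x) (y := v)]
  have h := hlower _ (measurableSet_ball.preimage (measurable_add_const a))
    (Set.preimage_mono (Metric.ball_subset_ball' hx))
  rw [measure_preimage_add_right, EuclideanSpace.volume_ball_fin_three] at h
  refine le_trans (le_of_eq ?_) h
  rw [ENNReal.ofReal_mul (by positivity), ENNReal.ofReal_mul hκ, ENNReal.ofReal_pow hρ]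
  ring

def nearPairs {E : Type*} [SeminormedAddCommGroup E] (a b v : E) (ρ ε : ℝ) : Set (E × E) :=
  {p | p.1 + a ∈ Metric.ball v ρ ∧ p.2 + b ∈ Metric.ball (p.1 + a) ε}

lemma isOpen_nearPairs {E : Type*} [SeminormedAddCommGroup E] (a b v : E) (ρ ε : ℝ) :
    IsOpen (nearPairs a b v ρ ε) :=
  (Metric.isOpen_ball.preimage (by fun_prop)).inter (isOpen_lt (by fun_prop) continuous_const)

lemma ofReal_le_prod_nearPairs {ν : Measure E3} [SFinite ν] {κ ε : ℝ} {v a b : E3}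
    (hlower : ∀ A : Set E3, MeasurableSet A →
      A ⊆ ((· + a) ⁻¹' Metric.ball v κ) ∪ ((· + b) ⁻¹' Metric.ball v κ) →
      ENNReal.ofReal κ * volume A ≤ ν A)
    (hε : 0 < ε) (hεκ : ε < κ / 2) :
    ENNReal.ofReal ((κ * (π * 4 / 3)) ^ 2 * (κ / 2) ^ 3 * ε ^ 3)
      ≤ ν.prod ν (nearPairs a b v (κ / 2) ε) := by
  have hκ : 0 < κ := by linarith
  have hνS := ofReal_le_measure_preimage_add_ball (fun A hA hAU => hlower A hA (hAU.trans
    Set.subset_union_left)) (half_pos hκ).le (by rw [dist_self]; linarith)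
  rw [show (κ * (π * 4 / 3)) ^ 2 * (κ / 2) ^ 3 * ε ^ 3
      = κ * (π * 4 / 3) * ε ^ 3 * (κ * (π * 4 / 3) * (κ / 2) ^ 3) by ring,
    ENNReal.ofReal_mul (by positivity)]
  refine (by gcongr : _ ≤ _ * ν ((· + a) ⁻¹' Metric.ball v (κ / 2))).trans <|
    Measure.mul_le_prod_apply_of_le_slice ν ν (isOpen_nearPairs a b v _ ε).measurableSet
      fun x hx => ?_
  have hx' : dist (x + a) v < κ / 2 := hx
  have hslice : Prod.mk x ⁻¹' nearPairs a b v (κ / 2) ε = (· + b) ⁻¹' Metric.ball (x + a) ε := by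
    ext y; simp [nearPairs, hx']
  rw [hslice]
  exact ofReal_le_measure_preimage_add_ball (fun A hA hAU => hlower A hA (hAU.trans
    Set.subset_union_right)) hε.le (by linarith)

/-- Under independence and the local lower bound `ν ≥ κ·λ` on
`(B_κ(v) − i) ∪ (B_κ(v) − j)` with `B_κ(v) ⊆ W` and `i ≠ j`, one has
`P(i + r_i ∈ W) > 0` and there is `c > 0` such that for every `0 < ε < κ/2`,
`P(i + r_i ∈ W and δ_i ≤ ε) ≥ c·ε³·P(i + r_i ∈ W)`. -/
theorem prob_small_delta_lower_bound
    (ν : Measure E3) [IsProbabilityMeasure ν]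
    {Ω : Type*} [MeasurableSpace Ω] (P : Measure Ω) [IsProbabilityMeasure P]
    (r : (Fin 3 → ℤ) → Ω → E3) (hmeas : ∀ j, Measurable (r j))
    (hindep : iIndepFun r P)
    (hlaw : ∀ j, P.map (r j) = ν)
    (κ : ℝ) (hκ : 0 < κ) (v : E3) (hball : Metric.ball v κ ⊆ Wcube)
    (i j : Fin 3 → ℤ) (hij : i ≠ j)
    (hlower : ∀ A : Set E3, MeasurableSet A →
        A ⊆ ((fun x => x + latt i) ⁻¹' Metric.ball v κ) ∪
            ((fun x => x + latt j) ⁻¹' Metric.ball v κ) →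
        ENNReal.ofReal κ * volume A ≤ ν A) :
    0 < P {ω | latt i + r i ω ∈ Wcube} ∧
      ∃ c : ℝ, 0 < c ∧ ∀ ε : ℝ, 0 < ε → ε < κ / 2 →
        ENNReal.ofReal (c * ε ^ 3) * P {ω | latt i + r i ω ∈ Wcube}
          ≤ P {ω | latt i + r i ω ∈ Wcube ∧ nnd r i ω ≤ ENNReal.ofReal ε} := by
  set S : Set E3 := (· + latt i) ⁻¹' Metric.ball v (κ / 2)
  have hS_W : ∀ x ∈ S, latt i + x ∈ Wcube := fun x hx =>
    add_comm x (latt i) ▸ hball (Metric.ball_subset_ball (by linarith) hx)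
  have hνS : ENNReal.ofReal (κ * (π * 4 / 3) * (κ / 2) ^ 3) ≤ ν S :=
    ofReal_le_measure_preimage_add_ball (fun A hA hAU => hlower A hA (hAU.trans
      Set.subset_union_left)) (by positivity) (by rw [dist_self]; linarith)
  have hPS : ν S ≤ P {ω | latt i + r i ω ∈ Wcube} := by
    rw [← hlaw i,
      Measure.map_apply (hmeas i) (measurableSet_ball.preimage (measurable_add_const _))]
    exact measure_mono fun ω hω => hS_W _ hω
  refine ⟨lt_of_lt_of_le (by positivity) (hνS.trans hPS),
    (κ * (π * 4 / 3)) ^ 2 * (κ / 2) ^ 3, by positivity,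
    fun ε hε hεκ => ?_⟩
  have hpair : (fun ω => (r i ω, r j ω)) ⁻¹' nearPairs (latt i) (latt j) v (κ / 2) ε
      ⊆ {ω | latt i + r i ω ∈ Wcube ∧ nnd r i ω ≤ ENNReal.ofReal ε} := fun ω hω =>
    ⟨hS_W _ hω.1, nnd_le_of_mem_ball hij hω.2⟩
  calc _ ≤ ENNReal.ofReal ((κ * (π * 4 / 3)) ^ 2 * (κ / 2) ^ 3 * ε ^ 3) :=
        mul_le_of_le_one_right' prob_le_one
    _ ≤ ν.prod ν (nearPairs (latt i) (latt j) v (κ / 2) ε) :=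
      ofReal_le_prod_nearPairs hlower hε hεκ
    _ = P ((fun ω => (r i ω, r j ω)) ⁻¹' nearPairs (latt i) (latt j) v (κ / 2) ε) :=
      ((hindep.indepFun hij).measure_preimage_prodMk (hmeas i) (hmeas j) (hlaw i) (hlaw j)
        (isOpen_nearPairs _ _ v _ ε).measurableSet).symm
    _ ≤ _ := measure_mono hpair
end
end

section
/- Let (r_j)_{j∈ℤ³} be independent, each with law ν. Then for every i ∈ ℤ³ and every ε > 0, P(i + r_i ∈ W and δ_i > ε) ≤ ∫_{W − i} exp(− Σ_{k ∈ ℤ³, k ≠ i} ν(B̄_ε(i + y − k))) dν(y), where B̄_ε(x) denotes the closed ball of radius ε centered at x. -/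
/-! Conditionally on `r i = y`, the events `r k ∉ B̄_ε(i + y - k)` for `k ≠ i` are independent,
each of probability `1 - ν(B̄_ε(i + y - k)) ≤ exp(-ν(B̄_ε(i + y - k)))`. Fubini for the joint law
`ν ⊗ ν^F` of `r i` and `(r k)_{k ∈ F}` gives the bound with the sum over any finite `F ∌ i`, and
monotone convergence for the decreasing integrands (bounded by `1`) lets `F` exhaust `ℤ³ \ {i}`. -/

open MeasureTheory ProbabilityTheory ENNReal

noncomputable section

/-- The exponential `x ↦ e^{-x}` for `x ∈ [0,∞]`, with `e^{-∞} = 0`. -/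
def eexp (x : ℝ≥0∞) : ℝ≥0∞ :=
  if x = ⊤ then 0 else ENNReal.ofReal (Real.exp (-x.toReal))

lemma eexp_eq_exp_neg (x : ℝ≥0∞) : eexp x = EReal.exp (-(x : EReal)) := by
  rcases eq_or_ne x ⊤ with rfl | hx
  · simp [eexp]
  · rw [eexp, if_neg hx, ← EReal.coe_ennreal_toReal hx, ← EReal.coe_neg, EReal.exp_coe]

lemma continuous_eexp : Continuous eexp := by
  simp_rw [funext eexp_eq_exp_neg]
  exact EReal.expHomeomorph.continuous.comp (continuous_neg.comp continuous_coe_ennreal_ereal)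

lemma antitone_eexp : Antitone eexp := fun a b hab => by
  simp only [eexp_eq_exp_neg, EReal.exp_le_exp_iff, EReal.neg_le_neg_iff]
  exact_mod_cast hab

lemma eexp_zero : eexp 0 = 1 := by simp [eexp]

lemma eexp_add (a b : ℝ≥0∞) : eexp (a + b) = eexp a * eexp b := by
  simp only [eexp_eq_exp_neg, EReal.coe_ennreal_add, ← EReal.exp_add]
  rw [EReal.neg_add (.inl (EReal.coe_ennreal_ne_bot _)) (.inr (EReal.coe_ennreal_ne_bot _)),
    sub_eq_add_neg]

lemma eexp_sum {α : Type*} (s : Finset α) (t : α → ℝ≥0∞) :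
    eexp (∑ k ∈ s, t k) = ∏ k ∈ s, eexp (t k) := by
  induction s using Finset.cons_induction with
  | empty => exact eexp_zero
  | cons k s hk ih => rw [Finset.sum_cons, Finset.prod_cons, eexp_add, ih]

lemma one_sub_le_eexp (a : ℝ≥0∞) : 1 - a ≤ eexp a := by
  rcases eq_or_ne a ⊤ with rfl | ha
  · simp
  rw [eexp, if_neg ha, ← ENNReal.ofReal_one, ← ENNReal.ofReal_toReal ha,
    ← ENNReal.ofReal_sub _ ENNReal.toReal_nonneg, ENNReal.toReal_ofReal ENNReal.toReal_nonneg]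
  exact ENNReal.ofReal_le_ofReal (by linarith [Real.add_one_le_exp (-a.toReal)])

lemma eexp_tsum {α : Type*} (t : α → ℝ≥0∞) :
    eexp (∑' k, t k) = ⨅ s : Finset α, eexp (∑ k ∈ s, t k) := by
  rw [ENNReal.tsum_eq_iSup_sum]
  exact antitone_eexp.map_ciSup_of_continuousAt continuous_eexp.continuousAt

section
variable {Ω ι E : Type*} [MeasurableSpace Ω] [MeasurableSpace E] {P : Measure Ω} {ν : Measure E}
  {r : ι → Ω → E}

lemma isProbabilityMeasure_of_iIndepFun (hmeas : ∀ j, Measurable (r j)) (hindep : iIndepFun r P)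
    (hlaw : ∀ j, P.map (r j) = ν) (i : ι) : IsProbabilityMeasure ν :=
  have := hindep.isProbabilityMeasure
  hlaw i ▸ Measure.isProbabilityMeasure_map (hmeas i).aemeasurable

lemma map_prodMk_pi_eq_prod_pi (hmeas : ∀ j, Measurable (r j)) (hindep : iIndepFun r P)
    (hlaw : ∀ j, P.map (r j) = ν) {i : ι} {F : Finset ι} (hiF : i ∉ F) :
    P.map (fun ω => (r i ω, fun k : F => r k ω)) = ν.prod (Measure.pi fun _ => ν) := by
  have := hindep.isProbabilityMeasure
  have : IsProbabilityMeasure ν := isProbabilityMeasure_of_iIndepFun hmeas hindep hlaw i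
  have hY : Measurable fun ω (k : F) => r k ω := measurable_pi_lambda _ fun k => hmeas k
  have hXY : IndepFun (r i) (fun ω (k : F) => r k ω) P := by
    exact (hindep.indepFun_finset {i} F (Finset.disjoint_singleton_left.mpr hiF) hmeas).comp
      (measurable_pi_apply ⟨i, Finset.mem_singleton_self i⟩) measurable_id
  rw [hXY.map_prod_eq_prod_map_map (hmeas i).aemeasurable hY.aemeasurable,
    iIndepFun.map_fun_eq_pi_map (f := fun k : F => r k) (fun k => (hmeas k).aemeasurable)
      (hindep.precomp Subtype.val_injective)]
  simp only [hlaw]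

lemma measurableSet_setOf_mem_and_forall_notMem {κ : Type*} [Countable κ] {S : Set E}
    (hS : MeasurableSet S) {U : κ → E → Set E}
    (hU : ∀ k, MeasurableSet {p : E × E | p.2 ∈ U k p.1}) :
    MeasurableSet {p : E × (κ → E) | p.1 ∈ S ∧ ∀ k, p.2 k ∉ U k p.1} := by
  simp only [Set.ofPred_and, Set.ofPred_forall]
  exact (measurable_fst hS).inter <| .iInter fun k =>
    (hU k).compl.preimage (measurable_fst.prodMk ((measurable_pi_apply k).comp measurable_snd))

lemma prod_pi_setOf_mem_and_forall_notMem {κ : Type*} [Fintype κ] [SigmaFinite ν] {S : Set E}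
    (hS : MeasurableSet S) (U : κ → E → Set E)
    (hU : ∀ k, MeasurableSet {p : E × E | p.2 ∈ U k p.1}) :
    ν.prod (Measure.pi fun _ : κ => ν) {p | p.1 ∈ S ∧ ∀ k, p.2 k ∉ U k p.1}
      = ∫⁻ y in S, ∏ k, ν (U k y)ᶜ ∂ν := by
  rw [Measure.prod_apply (measurableSet_setOf_mem_and_forall_notMem hS hU),
    ← lintegral_indicator hS]
  refine lintegral_congr fun y => ?_
  by_cases hy : y ∈ S
  · have hslice : Prod.mk y ⁻¹' {p : E × (κ → E) | p.1 ∈ S ∧ ∀ k, p.2 k ∉ U k p.1}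
        = Set.univ.pi fun k => (U k y)ᶜ := by
      ext z; simp [hy]
    rw [hslice, Measure.pi_pi, Set.indicator_of_mem hy]
  · have hslice : Prod.mk y ⁻¹' {p : E × (κ → E) | p.1 ∈ S ∧ ∀ k, p.2 k ∉ U k p.1} = ∅ := by
      ext z; simp [hy]
    rw [hslice, measure_empty, Set.indicator_of_notMem hy]

lemma measure_mem_and_forall_notMem_eq_lintegral (hmeas : ∀ j, Measurable (r j))
    (hindep : iIndepFun r P) (hlaw : ∀ j, P.map (r j) = ν) {i : ι} {F : Finset ι} (hiF : i ∉ F)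
    {S : Set E} (hS : MeasurableSet S) (U : ι → E → Set E)
    (hU : ∀ k, MeasurableSet {p : E × E | p.2 ∈ U k p.1}) :
    P {ω | r i ω ∈ S ∧ ∀ k ∈ F, r k ω ∉ U k (r i ω)} = ∫⁻ y in S, ∏ k ∈ F, ν (U k y)ᶜ ∂ν := by
  have : IsProbabilityMeasure ν := isProbabilityMeasure_of_iIndepFun hmeas hindep hlaw i
  have hY : Measurable fun ω (k : F) => r k ω := measurable_pi_lambda _ fun k => hmeas k
  calc P {ω | r i ω ∈ S ∧ ∀ k ∈ F, r k ω ∉ U k (r i ω)}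
      = P.map (fun ω => (r i ω, fun k : F => r k ω))
          {p | p.1 ∈ S ∧ ∀ k : F, p.2 k ∉ U k p.1} := by
        rw [Measure.map_apply ((hmeas i).prodMk hY)
          (measurableSet_setOf_mem_and_forall_notMem hS fun k => hU k)]
        simp
    _ = ∫⁻ y in S, ∏ k : F, ν (U k y)ᶜ ∂ν := by
        rw [map_prodMk_pi_eq_prod_pi hmeas hindep hlaw hiF,
          prod_pi_setOf_mem_and_forall_notMem hS (fun k : F => U k) fun k => hU k]
    _ = ∫⁻ y in S, ∏ k ∈ F, ν (U k y)ᶜ ∂ν :=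
        lintegral_congr fun y => Finset.prod_coe_sort F fun k => ν (U k y)ᶜ

lemma measure_mem_and_forall_ne_notMem_le_lintegral_eexp_sum (hmeas : ∀ j, Measurable (r j))
    (hindep : iIndepFun r P) (hlaw : ∀ j, P.map (r j) = ν) {i : ι} (s : Finset {k // k ≠ i})
    {S : Set E} (hS : MeasurableSet S) (U : ι → E → Set E)
    (hU : ∀ k, MeasurableSet {p : E × E | p.2 ∈ U k p.1}) :
    P {ω | r i ω ∈ S ∧ ∀ k ≠ i, r k ω ∉ U k (r i ω)}
      ≤ ∫⁻ y in S, eexp (∑ k ∈ s, ν (U k y)) ∂ν := by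
  have : IsProbabilityMeasure ν := isProbabilityMeasure_of_iIndepFun hmeas hindep hlaw i
  have hi : i ∉ s.map (Function.Embedding.subtype _) := by simp
  calc P {ω | r i ω ∈ S ∧ ∀ k ≠ i, r k ω ∉ U k (r i ω)}
      ≤ P {ω | r i ω ∈ S ∧ ∀ k ∈ s.map (Function.Embedding.subtype _), r k ω ∉ U k (r i ω)} :=
        measure_mono fun ω ⟨hiS, hk⟩ => ⟨hiS, fun k hkF => hk k (by aesop)⟩
    _ = ∫⁻ y in S, ∏ k ∈ s.map (Function.Embedding.subtype _), ν (U k y)ᶜ ∂ν :=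
        measure_mem_and_forall_notMem_eq_lintegral hmeas hindep hlaw hi hS U hU
    _ ≤ ∫⁻ y in S, eexp (∑ k ∈ s, ν (U k y)) ∂ν := by
        refine lintegral_mono fun y => ?_
        simp only [Finset.prod_map, Function.Embedding.coe_subtype, eexp_sum]
        refine Finset.prod_le_prod' fun k _ => ?_
        have hUy : MeasurableSet (U k y) := (hU k).preimage measurable_prodMk_left
        rw [prob_compl_eq_one_sub hUy]
        exact one_sub_le_eexp _

lemma measure_mem_and_forall_ne_notMem_le_lintegral_eexp [Countable ι]
    (hmeas : ∀ j, Measurable (r j)) (hindep : iIndepFun r P) (hlaw : ∀ j, P.map (r j) = ν)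
    (i : ι) {S : Set E} (hS : MeasurableSet S) (U : ι → E → Set E)
    (hU : ∀ k, MeasurableSet {p : E × E | p.2 ∈ U k p.1}) :
    P {ω | r i ω ∈ S ∧ ∀ k ≠ i, r k ω ∉ U k (r i ω)}
      ≤ ∫⁻ y in S, eexp (∑' k : {k // k ≠ i}, ν (U k y)) ∂ν := by
  have : IsProbabilityMeasure ν := isProbabilityMeasure_of_iIndepFun hmeas hindep hlaw i
  set f : Finset {k // k ≠ i} → E → ℝ≥0∞ := fun s y => eexp (∑ k ∈ s, ν (U k y))
  have hf_le (s : Finset {k // k ≠ i}) :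
      P {ω | r i ω ∈ S ∧ ∀ k ≠ i, r k ω ∉ U k (r i ω)} ≤ ∫⁻ y in S, f s y ∂ν :=
    measure_mem_and_forall_ne_notMem_le_lintegral_eexp_sum hmeas hindep hlaw s hS U hU
  rcases eq_or_ne (ν.restrict S) 0 with h0 | h0
  · simpa [h0] using hf_le ∅
  have hf_meas : ∀ s, Measurable (f s) := fun s => continuous_eexp.measurable.comp
    (Finset.measurable_sum _ fun k _ => measurable_measure_prodMk_left (hU k))
  have hf_int : ∀ s, ∫⁻ y in S, f s y ∂ν ≠ ⊤ := fun s =>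
    ne_top_of_le_ne_top (measure_ne_top (ν.restrict S) Set.univ) <| (lintegral_mono fun y =>
      (antitone_eexp bot_le).trans_eq eexp_zero).trans_eq lintegral_one
  have hf_anti : Antitone f := fun s t hst y => antitone_eexp (Finset.sum_le_sum_of_subset hst)
  calc P {ω | r i ω ∈ S ∧ ∀ k ≠ i, r k ω ∉ U k (r i ω)}
      ≤ ⨅ s, ∫⁻ y in S, f s y ∂ν := le_iInf hf_le
    _ = ∫⁻ y in S, eexp (∑' k : {k // k ≠ i}, ν (U k y)) ∂ν := by
        simp only [eexp_tsum]
        exact (lintegral_iInf_directed_of_measurable h0 hf_meas hf_int hf_anti.directed_ge).symm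

end

lemma measurableSet_Wcube : MeasurableSet Wcube := by
  simp only [Wcube, Set.ofPred_forall, Set.ofPred_and]
  refine .iInter fun j => ?_
  have hj : Measurable fun x : E3 => x j := (EuclideanSpace.proj j).continuous.measurable
  exact (measurableSet_le measurable_const hj).inter (measurableSet_lt hj measurable_const)

lemma notMem_closedBall_of_ofReal_lt_nnd {Ω : Type*} {r : (Fin 3 → ℤ) → Ω → E3}
    {i : Fin 3 → ℤ} {ω : Ω} {ε : ℝ} (h : ENNReal.ofReal ε < nnd r i ω) {k : Fin 3 → ℤ}
    (hk : k ≠ i) : r k ω ∉ Metric.closedBall (latt i + r i ω - latt k) ε := by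
  have hlt := h.trans_le (iInf_le _ ⟨k, hk⟩)
  rw [edist_dist, ENNReal.ofReal_lt_ofReal_iff'] at hlt
  rw [Metric.mem_closedBall, not_le]
  refine hlt.1.trans_eq ?_
  rw [dist_eq_norm, dist_eq_norm, ← norm_neg]
  congr 1
  abel

theorem prob_delta_large_bound_general
    (ν : Measure E3)
    {Ω : Type*} [MeasurableSpace Ω] (P : Measure Ω)
    (r : (Fin 3 → ℤ) → Ω → E3) (hmeas : ∀ j, Measurable (r j))
    (hindep : iIndepFun r P)
    (hlaw : ∀ j, P.map (r j) = ν)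
    (i : Fin 3 → ℤ) (ε : ℝ) :
    P {ω | latt i + r i ω ∈ Wcube ∧ ENNReal.ofReal ε < nnd r i ω}
      ≤ ∫⁻ y in (fun x => x + latt i) ⁻¹' Wcube,
          eexp (∑' k : {k : Fin 3 → ℤ // k ≠ i},
            ν (Metric.closedBall (latt i + y - latt (k : Fin 3 → ℤ)) ε)) ∂ν := by
  refine (measure_mono ?_).trans (measure_mem_and_forall_ne_notMem_le_lintegral_eexp hmeas
    hindep hlaw i (measurableSet_Wcube.preimage (measurable_add_const _))
    (fun k y => Metric.closedBall (latt i + y - latt k) ε) fun k => ?_)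
  · rintro ω ⟨hW, hδ⟩
    exact ⟨by rwa [Set.mem_preimage, add_comm],
      fun k hk => notMem_closedBall_of_ofReal_lt_nnd hδ hk⟩
  · exact measurableSet_le (measurable_snd.dist
      ((measurable_const.add measurable_fst).sub measurable_const)) measurable_const

/-- If the `r_j` are independent with common law `ν`, then for every
`i ∈ ℤ³` and `ε > 0`,
`P(i + r_i ∈ W and δ_i > ε) ≤ ∫_{W−i} exp(−Σ_{k ≠ i} ν(B̄_ε(i + y − k))) dν(y)`. -/
theorem prob_delta_large_bound
    (ν : Measure E3) [IsProbabilityMeasure ν]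
    {Ω : Type*} [MeasurableSpace Ω] (P : Measure Ω) [IsProbabilityMeasure P]
    (r : (Fin 3 → ℤ) → Ω → E3) (hmeas : ∀ j, Measurable (r j))
    (hindep : iIndepFun r P)
    (hlaw : ∀ j, P.map (r j) = ν)
    (i : Fin 3 → ℤ) (ε : ℝ) (hε : 0 < ε) :
    P {ω | latt i + r i ω ∈ Wcube ∧ ENNReal.ofReal ε < nnd r i ω}
      ≤ ∫⁻ y in (fun x => x + latt i) ⁻¹' Wcube,
          eexp (∑' k : {k : Fin 3 → ℤ // k ≠ i},
            ν (Metric.closedBall (latt i + y - latt (k : Fin 3 → ℤ)) ε)) ∂ν :=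
  prob_delta_large_bound_general ν P r hmeas hindep hlaw i ε
end
end
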